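/- Let α ∈ (0,1) be the unique solution of √(2π)(1-α²)e^{α²/2}(erf(α/√2)+1) = 2α, and h(t,x) = (1-α²)∫₀^∞ exp(ax - a²t/2) da. Then ∂h/∂x (t, α√t) = 1/t, i.e., h satisfies the smooth fit condition with the gain function g(t,x) = x/t at the boundary x = α√t. -/

import Mathlib

/-!
Differentiating under the integral sign, and integrating
`∂ₐ exp (a x - a² t / 2) = (x - a t) exp (a x - a² t / 2)` over `(0, ∞)`, gives
`∂ₓ ∫₀^∞ exp (a x - a² t / 2) da = 1/t + (x/t) ∫₀^∞ exp (a x - a² t / 2) da`.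
Completing the square turns the integral into a Gaussian tail,
`∫₀^∞ exp (a x - a² t / 2) da = e^{x²/2t} √(2π/t) (erf (x/√(2t)) + 1) / 2`,
and at `x = α√t` the equation defining `α` makes `(1 - α²)(x/t) ∫₀^∞ … = α²/t`,
so that `∂ₓh = (1 - α²)/t + α²/t = 1/t`.
-/

open MeasureTheory Real

/-- The error function `erf z = (2/√π) ∫₀^z exp (-s²) ds`. -/
noncomputable def erf (z : ℝ) : ℝ :=
  (2 / Real.sqrt π) * ∫ s in (0 : ℝ)..z, Real.exp (-s ^ 2)

open Set Filter Topology

theorem integral_Ioi_comp_sub_right {E : Type*} [NormedAddCommGroup E] [NormedSpace ℝ E]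
    (g : ℝ → E) (c m : ℝ) :
    ∫ a in Ioi c, g (a - m) = ∫ u in Ioi (c - m), g u := by
  have := (measurePreserving_sub_right volume m).setIntegral_preimage_emb
    (measurableEmbedding_subRight m) g (Ioi (c - m))
  simpa [preimage_sub_const_Ioi] using this

theorem integral_Ioi_neg_exp_neg_sq (d : ℝ) :
    ∫ u in Ioi (-d), exp (-u ^ 2) = √π / 2 * (erf d + 1) := by
  have hint : ∀ c : ℝ, IntegrableOn (fun u : ℝ => exp (-u ^ 2)) (Ioi c) := fun c => by
    simpa using (integrable_exp_neg_mul_sq one_pos).integrableOn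
  have hsymm : ∫ u in -d..0, exp (-u ^ 2) = ∫ u in 0..d, exp (-u ^ 2) := by
    rw [← neg_zero, ← intervalIntegral.integral_comp_neg]
    simp
  rw [← intervalIntegral.integral_interval_add_Ioi (hint (-d)) (hint 0), hsymm, erf]
  have hhalf := integral_gaussian_Ioi 1
  simp only [neg_one_mul, div_one] at hhalf
  rw [hhalf]
  have : √π ≠ 0 := by positivity
  field_simp

theorem integral_Ioi_neg_exp_neg_mul_sq {b : ℝ} (hb : 0 < b) (d : ℝ) :
    ∫ u in Ioi (-d), exp (-b * u ^ 2) = √(π / b) / 2 * (erf (√b * d) + 1) := by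
  have hsb : 0 < √b := sqrt_pos.mpr hb
  calc ∫ u in Ioi (-d), exp (-b * u ^ 2) = ∫ u in Ioi (-d), exp (-(√b * u) ^ 2) := by
        simp_rw [mul_pow, sq_sqrt hb.le, neg_mul]
    _ = (√b)⁻¹ * ∫ s in Ioi (-(√b * d)), exp (-s ^ 2) := by
        rw [integral_comp_mul_left_Ioi (fun s => exp (-s ^ 2)) _ hsb, smul_eq_mul, mul_neg]
    _ = √(π / b) / 2 * (erf (√b * d) + 1) := by
        rw [integral_Ioi_neg_exp_neg_sq, sqrt_div' π hb.le]
        field_simp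

section QuadraticExponent

variable {t : ℝ}

theorem exp_mul_sub_sq_eq (ht : t ≠ 0) (x a : ℝ) :
    exp (a * x - a ^ 2 * t / 2) = exp (x ^ 2 / (2 * t)) * exp (-(t / 2) * (a - x / t) ^ 2) := by
  rw [← exp_add]
  congr 1
  field_simp
  ring

variable (ht : 0 < t)
include ht

theorem integrable_exp_mul_sub_sq (x : ℝ) :
    Integrable fun a => exp (a * x - a ^ 2 * t / 2) := by
  simp_rw [exp_mul_sub_sq_eq ht.ne']
  exact ((integrable_exp_neg_mul_sq (half_pos ht)).comp_sub_right (x / t)).const_mul _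

theorem integrable_mul_exp_mul_sub_sq (x : ℝ) :
    Integrable fun a => a * exp (a * x - a ^ 2 * t / 2) := by
  have hG := (integrable_exp_neg_mul_sq (half_pos ht)).comp_sub_right (x / t)
  have hM := (integrable_mul_exp_neg_mul_sq (half_pos ht)).comp_sub_right (x / t)
  refine ((hM.add (hG.const_mul (x / t))).const_mul (exp (x ^ 2 / (2 * t)))).congr ?_
  filter_upwards with a
  simp only [Pi.add_apply, exp_mul_sub_sq_eq ht.ne']
  ring

theorem tendsto_exp_mul_sub_sq_atTop (x : ℝ) :
    Tendsto (fun a => exp (a * x - a ^ 2 * t / 2)) atTop (𝓝 0) := by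
  simp_rw [exp_mul_sub_sq_eq ht.ne']
  rw [← mul_zero (exp (x ^ 2 / (2 * t)))]
  refine (tendsto_exp_atBot.comp ?_).const_mul _
  have hsq : Tendsto (fun a : ℝ => (a - x / t) ^ 2) atTop atTop :=
    (tendsto_pow_atTop two_ne_zero).comp (tendsto_atTop_add_const_right _ _ tendsto_id)
  exact hsq.const_mul_atTop_of_neg (by linarith)

theorem integral_Ioi_sub_mul_exp_mul_sub_sq (x : ℝ) :
    ∫ a in Ioi 0, (x - a * t) * exp (a * x - a ^ 2 * t / 2) = -1 := by
  have hderiv : ∀ a ∈ Ici (0 : ℝ), HasDerivAt (fun a => exp (a * x - a ^ 2 * t / 2))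
      ((x - a * t) * exp (a * x - a ^ 2 * t / 2)) a := fun a _ => by
    have hq : HasDerivAt (fun a : ℝ => a * x - a ^ 2 * t / 2) (x - a * t) a := by
      refine (((hasDerivAt_id' a).mul_const x).sub
        (((hasDerivAt_pow 2 a).mul_const t).div_const 2)).congr_deriv ?_
      ring
    exact hq.exp.congr_deriv (mul_comm _ _)
  have hint : IntegrableOn (fun a => (x - a * t) * exp (a * x - a ^ 2 * t / 2)) (Ioi 0) := by
    refine (((integrable_exp_mul_sub_sq ht x).const_mul x).sub
      ((integrable_mul_exp_mul_sub_sq ht x).mul_const t)).integrableOn.congr_fun ?_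
      measurableSet_Ioi
    intro a _
    simp only [Pi.sub_apply]
    ring
  rw [integral_Ioi_of_hasDerivAt_of_tendsto' hderiv hint (tendsto_exp_mul_sub_sq_atTop ht x)]
  simp

theorem hasDerivAt_integral_Ioi_exp_mul_sub_sq (x : ℝ) :
    HasDerivAt (fun y => ∫ a in Ioi 0, exp (a * y - a ^ 2 * t / 2))
      (∫ a in Ioi 0, a * exp (a * x - a ^ 2 * t / 2)) x := by
  refine (hasDerivAt_integral_of_dominated_loc_of_deriv_le
    (F := fun y a => exp (a * y - a ^ 2 * t / 2)) (F' := fun y a => a * exp (a * y - a ^ 2 * t / 2))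
    (Metric.ball_mem_nhds x one_pos)
    (Eventually.of_forall fun y => (by fun_prop : Continuous _).aestronglyMeasurable)
    (integrable_exp_mul_sub_sq ht x).integrableOn
    (by fun_prop : Continuous _).aestronglyMeasurable ?_
    (integrable_mul_exp_mul_sub_sq ht (x + 1)).integrableOn ?_).2
  · filter_upwards [ae_restrict_mem measurableSet_Ioi] with a (ha : 0 < a) y hy
    have hy : y ≤ x + 1 := by linarith [(abs_lt.mp (mem_ball_iff_norm.mp hy)).2]
    rw [norm_mul, norm_of_nonneg ha.le, norm_of_nonneg (exp_pos _).le]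
    gcongr
  · filter_upwards with a y _
    exact (((hasDerivAt_id' y).const_mul a).sub_const _).exp.congr_deriv (by ring)

theorem integral_Ioi_mul_exp_mul_sub_sq (x : ℝ) :
    ∫ a in Ioi 0, a * exp (a * x - a ^ 2 * t / 2)
      = 1 / t + x / t * ∫ a in Ioi 0, exp (a * x - a ^ 2 * t / 2) := by
  have h := integral_Ioi_sub_mul_exp_mul_sub_sq ht x
  simp_rw [sub_mul, mul_right_comm _ t] at h
  rw [integral_sub ((integrable_exp_mul_sub_sq ht x).const_mul x).integrableOn
    ((integrable_mul_exp_mul_sub_sq ht x).mul_const t).integrableOn, integral_const_mul,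
    integral_mul_const] at h
  set I := ∫ a in Ioi 0, exp (a * x - a ^ 2 * t / 2)
  set D := ∫ a in Ioi 0, a * exp (a * x - a ^ 2 * t / 2)
  field_simp
  linarith

theorem integral_Ioi_exp_mul_sub_sq (x : ℝ) :
    ∫ a in Ioi 0, exp (a * x - a ^ 2 * t / 2)
      = exp (x ^ 2 / (2 * t)) * (√(π / (t / 2)) / 2 * (erf (√(t / 2) * (x / t)) + 1)) := by
  simp_rw [exp_mul_sub_sq_eq ht.ne']
  rw [integral_const_mul, integral_Ioi_comp_sub_right (fun u => exp (-(t / 2) * u ^ 2)),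
    zero_sub, integral_Ioi_neg_exp_neg_mul_sq (half_pos ht)]

end QuadraticExponent

theorem smooth_fit_general (α : ℝ)
    (heq : Real.sqrt (2 * π) * (1 - α ^ 2) * Real.exp (α ^ 2 / 2)
      * (erf (α / Real.sqrt 2) + 1) = 2 * α)
    (h : ℝ → ℝ → ℝ)
    (hh : ∀ t x, h t x
      = (1 - α ^ 2) * ∫ a in Set.Ioi (0 : ℝ), Real.exp (a * x - a ^ 2 * t / 2)) :
    ∀ t : ℝ, 0 < t → HasDerivAt (fun x => h t x) (1 / t) (α * Real.sqrt t) := by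
  intro t ht
  have hderiv := (hasDerivAt_integral_Ioi_exp_mul_sub_sq ht (α * √t)).const_mul (1 - α ^ 2)
  rw [integral_Ioi_mul_exp_mul_sub_sq ht, integral_Ioi_exp_mul_sub_sq ht] at hderiv
  have hst : √t ^ 2 = t := sq_sqrt ht.le
  have hexp : (α * √t) ^ 2 / (2 * t) = α ^ 2 / 2 := by
    field_simp
    rw [hst]
  have herf : √(t / 2) * (α * √t / t) = α / √2 := by
    rw [sqrt_div' t two_pos.le]
    field_simp
    rw [hst]
    ring
  have hsqrt : √(π / (t / 2)) = √(2 * π) / √t := by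
    rw [← sqrt_div' _ ht.le]
    ring_nf
  rw [hexp, herf, hsqrt] at hderiv
  rw [show (fun x => h t x) = _ from funext (hh t)]
  refine hderiv.congr_deriv ?_
  field_simp
  linear_combination α * heq

/-- Smooth fit: with `α ∈ (0,1)` the root of the transcendental equation and
`h t x = (1-α²)∫₀^∞ exp (a*x - a²*t/2) da`, the spatial derivative of `h` at the
boundary point `x = α√t` equals `1/t`, the derivative of the gain `g(t,x) = x/t`. -/
theorem smooth_fit (α : ℝ) (hα : α ∈ Set.Ioo (0 : ℝ) 1)
    (heq : Real.sqrt (2 * π) * (1 - α ^ 2) * Real.exp (α ^ 2 / 2)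
      * (erf (α / Real.sqrt 2) + 1) = 2 * α)
    (h : ℝ → ℝ → ℝ)
    (hh : ∀ t x, h t x
      = (1 - α ^ 2) * ∫ a in Set.Ioi (0 : ℝ), Real.exp (a * x - a ^ 2 * t / 2)) :
    ∀ t : ℝ, 0 < t → HasDerivAt (fun x => h t x) (1 / t) (α * Real.sqrt t) :=
  smooth_fit_general α heq h hh
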